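/- Let m', k ∈ ℤⁿ, σ ∈ {-1,1}, j an index with kⱼ ≠ 0, and A := Σ_s m'_s k_s ≠ 0. Set v(q) = cos(2π⟨m',q⟩+α)/(2πA), τ(p) = -sin(2π⟨k,p⟩+β)/(2π), and w(q) = cos(2πσqⱼ+γ)/(4π²kⱼσ). Then {w, {v, τ}}(q,p) = sin(2π⟨m',q⟩+α)·sin(2π⟨k,p⟩+β)·sin(2πσqⱼ+γ). -/

import Mathlib

open Real

/-- The Poisson bracket {f,g} = Σᵢ (∂_{qᵢ}f ∂_{pᵢ}g - ∂_{qᵢ}g ∂_{pᵢ}f) on ℝ^{2n}. -/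
noncomputable def poisson (n : ℕ) (f g : ((Fin n → ℝ) × (Fin n → ℝ)) → ℝ) :
    ((Fin n → ℝ) × (Fin n → ℝ)) → ℝ :=
  fun x => ∑ i,
    (fderiv ℝ f x (Pi.single i 1, (0 : Fin n → ℝ)) * fderiv ℝ g x ((0 : Fin n → ℝ), Pi.single i 1)
   - fderiv ℝ g x (Pi.single i 1, (0 : Fin n → ℝ)) * fderiv ℝ f x ((0 : Fin n → ℝ), Pi.single i 1))


noncomputable def LQ (n : ℕ) (c : Fin n → ℝ) : ((Fin n → ℝ) × (Fin n → ℝ)) →L[ℝ] ℝ :=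
  ∑ s, c s • ((ContinuousLinearMap.proj s : (Fin n → ℝ) →L[ℝ] ℝ).comp
    (ContinuousLinearMap.fst ℝ (Fin n → ℝ) (Fin n → ℝ)))

noncomputable def LP (n : ℕ) (c : Fin n → ℝ) : ((Fin n → ℝ) × (Fin n → ℝ)) →L[ℝ] ℝ :=
  ∑ s, c s • ((ContinuousLinearMap.proj s : (Fin n → ℝ) →L[ℝ] ℝ).comp
    (ContinuousLinearMap.snd ℝ (Fin n → ℝ) (Fin n → ℝ)))

lemma LQ_apply {n : ℕ} (c : Fin n → ℝ) (x) : LQ n c x = ∑ s, c s * x.1 s := by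
  simp [LQ]

lemma LP_apply {n : ℕ} (c : Fin n → ℝ) (x) : LP n c x = ∑ s, c s * x.2 s := by
  simp [LP]

lemma LQ_q {n : ℕ} (c : Fin n → ℝ) (i : Fin n) :
    LQ n c (Pi.single i 1, (0 : Fin n → ℝ)) = c i := by
  simp [LQ_apply, Pi.single_apply]

lemma LQ_p {n : ℕ} (c : Fin n → ℝ) (i : Fin n) :
    LQ n c ((0 : Fin n → ℝ), Pi.single i 1) = 0 := by
  simp [LQ_apply]

lemma LP_q {n : ℕ} (c : Fin n → ℝ) (i : Fin n) :
    LP n c (Pi.single i 1, (0 : Fin n → ℝ)) = 0 := by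
  simp [LP_apply]

lemma LP_p {n : ℕ} (c : Fin n → ℝ) (i : Fin n) :
    LP n c ((0 : Fin n → ℝ), Pi.single i 1) = c i := by
  simp [LP_apply, Pi.single_apply]

lemma hasF_cos {E : Type*} [NormedAddCommGroup E] [NormedSpace ℝ E]
    (L : E →L[ℝ] ℝ) (b d : ℝ) (x : E) :
    HasFDerivAt (fun x => Real.cos (L x + b) / d) ((-Real.sin (L x + b) / d) • L) x := by
  have h := ((L.hasFDerivAt (x := x)).add_const b).cos.mul_const d⁻¹
  rw [smul_smul] at h
  have e : d⁻¹ * -Real.sin (L x + b) = -Real.sin (L x + b) / d := by ring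
  rw [e] at h
  simpa only [div_eq_mul_inv] using h

lemma hasF_cos0 {E : Type*} [NormedAddCommGroup E] [NormedSpace ℝ E]
    (L : E →L[ℝ] ℝ) (b : ℝ) (x : E) :
    HasFDerivAt (fun x => Real.cos (L x + b)) ((-Real.sin (L x + b)) • L) x :=
  ((L.hasFDerivAt (x := x)).add_const b).cos

lemma hasF_sin_mul {E : Type*} [NormedAddCommGroup E] [NormedSpace ℝ E]
    (L : E →L[ℝ] ℝ) (b d : ℝ) (x : E) :
    HasFDerivAt (fun x => Real.sin (L x + b) * d) ((Real.cos (L x + b) * d) • L) x := by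
  have h := ((L.hasFDerivAt (x := x)).add_const b).sin.mul_const d
  rw [smul_smul] at h
  have e : d * Real.cos (L x + b) = Real.cos (L x + b) * d := by ring
  rw [e] at h
  exact h

lemma hasF_sin {E : Type*} [NormedAddCommGroup E] [NormedSpace ℝ E]
    (L : E →L[ℝ] ℝ) (b : ℝ) (x : E) :
    HasFDerivAt (fun x => Real.sin (L x + b)) ((Real.cos (L x + b)) • L) x :=
  ((L.hasFDerivAt (x := x)).add_const b).sin

/-- with v, τ, w as in the text,
{w,{v,τ}}(q,p) = sin(2π⟨m',q⟩+α)·sin(2π⟨k,p⟩+β)·sin(2πσqⱼ+γ). -/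
theorem stmt5 (n : ℕ) (m' k : Fin n → ℤ) (σ : ℝ) (hσ : σ = 1 ∨ σ = -1)
    (j : Fin n) (hkj : k j ≠ 0)
    (A : ℤ) (hA : A = ∑ s, m' s * k s) (hA0 : A ≠ 0) (α β γ : ℝ)
    (V T W : ((Fin n → ℝ) × (Fin n → ℝ)) → ℝ)
    (hV : ∀ q p : Fin n → ℝ,
      V (q, p) = Real.cos (2 * π * (∑ s, (m' s : ℝ) * q s) + α) / (2 * π * (A : ℝ)))
    (hT : ∀ q p : Fin n → ℝ,
      T (q, p) = - Real.sin (2 * π * (∑ s, (k s : ℝ) * p s) + β) / (2 * π))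
    (hW : ∀ q p : Fin n → ℝ,
      W (q, p) = Real.cos (2 * π * σ * q j + γ) / (4 * π ^ 2 * (k j : ℝ) * σ)) :
    ∀ q p : Fin n → ℝ,
      poisson n W (poisson n V T) (q, p)
        = Real.sin (2 * π * (∑ s, (m' s : ℝ) * q s) + α)
          * Real.sin (2 * π * (∑ s, (k s : ℝ) * p s) + β)
          * Real.sin (2 * π * σ * q j + γ) := by
  have hπ : (π : ℝ) ≠ 0 := Real.pi_ne_zero
  have hAr : (A : ℝ) ≠ 0 := Int.cast_ne_zero.mpr hA0
  have hkr : ((k j : ℝ)) ≠ 0 := Int.cast_ne_zero.mpr hkj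
  have hσ0 : σ ≠ 0 := by rcases hσ with h | h <;> rw [h] <;> norm_num
  set c1 : Fin n → ℝ := fun s => 2 * π * (m' s : ℝ) with hc1
  set c2 : Fin n → ℝ := fun s => 2 * π * (k s : ℝ) with hc2
  set cj : Fin n → ℝ := Pi.single j (2 * π * σ) with hcj
  have key1 : ∀ u : Fin n → ℝ, (∑ s, c1 s * u s) = 2 * π * ∑ s, (m' s : ℝ) * u s := by
    intro u
    rw [Finset.mul_sum]
    exact Finset.sum_congr rfl fun s _ =>
      show 2 * π * (m' s : ℝ) * u s = 2 * π * ((m' s : ℝ) * u s) by ring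
  have key2 : ∀ u : Fin n → ℝ, (∑ s, c2 s * u s) = 2 * π * ∑ s, (k s : ℝ) * u s := by
    intro u
    rw [Finset.mul_sum]
    exact Finset.sum_congr rfl fun s _ =>
      show 2 * π * (k s : ℝ) * u s = 2 * π * ((k s : ℝ) * u s) by ring
  have keyj : ∀ u : Fin n → ℝ, (∑ s, cj s * u s) = 2 * π * σ * u j := by
    intro u
    simp [hcj, Pi.single_apply]
  -- rewrite the three functions in LQ/LP form
  have hVfun : V = fun x => Real.cos (LQ n c1 x + α) / (2 * π * (A : ℝ)) := by
    funext x
    obtain ⟨q, p⟩ := x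
    rw [hV q p, LQ_apply, key1]
  have hTfun : T = fun x => Real.sin (LP n c2 x + β) * (-(2 * π)⁻¹) := by
    funext x
    obtain ⟨q, p⟩ := x
    rw [hT q p, LP_apply, key2]
    ring
  have hWfun : W = fun x => Real.cos (LQ n cj x + γ) / (4 * π ^ 2 * (k j : ℝ) * σ) := by
    funext x
    obtain ⟨q, p⟩ := x
    rw [hW q p, LQ_apply, keyj]
  -- the inner bracket
  have hFfun : poisson n V T
      = fun x => Real.sin (LQ n c1 x + α) * Real.cos (LP n c2 x + β) := by
    funext x
    have hdV := (hasF_cos (LQ n c1) α (2 * π * (A : ℝ)) x).fderiv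
    have hdT := (hasF_sin_mul (LP n c2) β (-(2 * π)⁻¹) x).fderiv
    simp only [poisson, hVfun, hTfun, hdV, hdT]
    simp only [ContinuousLinearMap.coe_smul', Pi.smul_apply, LQ_q, LQ_p, LP_q, LP_p,
      smul_eq_mul, mul_zero, zero_mul, sub_zero]
    have step : ∀ i : Fin n, -Real.sin (LQ n c1 x + α) / (2 * π * (A : ℝ)) * c1 i
        * (Real.cos (LP n c2 x + β) * -(2 * π)⁻¹ * c2 i)
        = Real.sin (LQ n c1 x + α) * Real.cos (LP n c2 x + β) / (A : ℝ)
          * ((m' i : ℝ) * (k i : ℝ)) := by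
      intro i
      simp only [hc1, hc2]
      field_simp
    rw [Finset.sum_congr rfl fun i _ => step i, ← Finset.mul_sum]
    have hsum : (∑ i, (m' i : ℝ) * (k i : ℝ)) = (A : ℝ) := by
      rw [hA]; push_cast; rfl
    rw [hsum]
    field_simp
  -- now the outer bracket
  intro q p
  have hdW := (hasF_cos (LQ n cj) γ (4 * π ^ 2 * (k j : ℝ) * σ) (q, p)).fderiv
  have hdF := ((hasF_sin (LQ n c1) α (q, p)).mul (hasF_cos0 (LP n c2) β (q, p))).fderiv
  simp only [Pi.mul_def] at hdF
  rw [hFfun] at *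
  simp only [poisson, hWfun, hdW, hdF]
  simp only [ContinuousLinearMap.add_apply, ContinuousLinearMap.coe_smul', Pi.smul_apply,
    LQ_q, LQ_p, LP_q, LP_p, smul_eq_mul, mul_zero, zero_mul, sub_zero, add_zero, zero_add]
  rw [Finset.sum_eq_single j
    (fun i _ hij => by simp only [hcj]; simp [Pi.single_apply, hij]) (by simp)]
  have h1 : LQ n cj (q, p) + γ = 2 * π * σ * q j + γ := by rw [LQ_apply, keyj]
  have h2 : LQ n c1 (q, p) + α = 2 * π * (∑ s, (m' s : ℝ) * q s) + α := by
    rw [LQ_apply, key1]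
  have h3 : LP n c2 (q, p) + β = 2 * π * (∑ s, (k s : ℝ) * p s) + β := by
    rw [LP_apply, key2]
  rw [h1, h2, h3]
  simp only [hcj, hc2, Pi.single_eq_same]
  field_simp
  ring
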